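/- arXiv:math/0503061 — 2 statements merged into one kernel-verified Lean document; each statement's English description precedes it below -/
import Mathlib

section
/- Let p > 1 be a real number, A ≥ 0, B ≥ 1, t ≥ 1 and c ≥ 1 integers, and let T > 0 be a real number with p^A T^{B−t} < 1 and p^{A+c} T^B < 1. Then the series ∑_{r=1}^∞ p^{Ar} T^{Br} ∑_{b ∈ {1,…,r}^c} μ_p(r; b) · T^{−t·min{r, b_1, …, b_c}} converges and its sum equals p^A T^{B−t} (1 − p^A T^B) / ( (1 − p^A T^{B−t}) (1 − p^{A+c} T^B) ). -/
open Finset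

noncomputable section

/-- `μ_p(a,b)`: the measure of elements of `pℤ_p/(p^a)` of valuation `b` (for `1 ≤ b ≤ a`). -/
def mu (p : ℝ) (a b : ℕ) : ℝ := if b = a then 1 else p ^ (a - b) * (1 - p⁻¹)

/-- `μ_p(a; b) = ∏_j μ_p(a, b_j)` for a tuple `b`. -/
def muV (p : ℝ) (a : ℕ) {k : ℕ} (b : Fin k → ℕ) : ℝ := ∏ j, mu p a (b j)

/-- `mins r f = min{r, f 0, …, f (k-1)}`. -/
def mins (r : ℕ) {k : ℕ} (f : Fin k → ℕ) : ℕ := (List.ofFn f).foldr min r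

/-!
Group the tuples `b ∈ {1,…,r}^c` by `m = min(r, b)`. The `μ_p(r; ·)`-mass of `{m,…,r}^c` is
`(∑_{a=m}^{r} μ_p(r,a))^c = p^{c(r-m)}`, so the inner sum equals
`T^{-tr} + (1 - p^{-c}) ∑_{0<m<r} p^{c(r-m)} T^{-tm}`. With `x = p^A T^{B-t}` and `y = p^{A+c} T^B`
the `r`-th term becomes `x^r + (1 - p^{-c}) ∑_{0<m<r} x^m y^{r-m}`: a geometric series plus a
multiple of the Cauchy product of two geometric series, with sum
`x/(1-x) + (1 - p^{-c}) x y / ((1-x)(1-y))`.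
-/

lemma le_foldr_min_iff {m r : ℕ} {l : List ℕ} :
    m ≤ l.foldr min r ↔ m ≤ r ∧ ∀ a ∈ l, m ≤ a := by
  induction l with
  | nil => simp
  | cons b l ih => simp only [List.foldr_cons, le_min_iff, ih, List.forall_mem_cons]; tauto

lemma le_mins_iff {m r k : ℕ} {f : Fin k → ℕ} : m ≤ mins r f ↔ m ≤ r ∧ ∀ j, m ≤ f j := by
  rw [mins, le_foldr_min_iff, List.forall_mem_ofFn_iff]

lemma filter_mins_eq_sdiff {c r m : ℕ} (hc : c ≠ 0) (hm : 0 < m) :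
    {b ∈ Fintype.piFinset fun _ : Fin c => Icc 1 r | mins r b = m} =
      (Fintype.piFinset fun _ : Fin c => Icc m r) \
        Fintype.piFinset fun _ : Fin c => Icc (m + 1) r := by
  ext b
  have j₀ : Fin c := ⟨0, Nat.pos_of_ne_zero hc⟩
  rw [mem_filter, mem_sdiff, le_antisymm_iff, ← not_lt, Nat.lt_iff_add_one_le, le_mins_iff,
    le_mins_iff]
  simp only [Fintype.mem_piFinset, mem_Icc]
  constructor
  · rintro ⟨hb, hnot, hm, hmb⟩
    exact ⟨fun j ↦ ⟨hmb j, (hb j).2⟩, fun h ↦ hnot ⟨(h j₀).1.trans (h j₀).2, fun j ↦ (h j).1⟩⟩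
  · rintro ⟨hb, hnot⟩
    exact ⟨fun j ↦ ⟨hm.trans_le (hb j).1, (hb j).2⟩,
      fun h ↦ hnot fun j ↦ ⟨h.2 j, (hb j).2⟩, (hb j₀).1.trans (hb j₀).2, fun j ↦ (hb j).1⟩

lemma sum_piFinset_prod_mul_mins {R : Type*} [CommRing R] (w g : ℕ → R) {c : ℕ} (hc : c ≠ 0)
    (r : ℕ) :
    ∑ b ∈ Fintype.piFinset (fun _ : Fin c => Icc 1 r), (∏ j, w (b j)) * g (mins r b) =
      ∑ m ∈ Icc 1 r, ((∑ a ∈ Icc m r, w a) ^ c - (∑ a ∈ Icc (m + 1) r, w a) ^ c) * g m := by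
  have hmaps : ∀ b ∈ Fintype.piFinset (fun _ : Fin c => Icc 1 r), mins r b ∈ Icc 1 r := by
    intro b hb
    rw [Fintype.mem_piFinset] at hb
    have j₀ : Fin c := ⟨0, Nat.pos_of_ne_zero hc⟩
    simp only [mem_Icc] at hb ⊢
    exact ⟨le_mins_iff.2 ⟨(hb j₀).1.trans (hb j₀).2, fun j ↦ (hb j).1⟩,
      (le_mins_iff.1 le_rfl).1⟩
  rw [← sum_fiberwise_of_maps_to hmaps]
  refine sum_congr rfl fun m hm ↦ ?_
  rw [sum_congr rfl fun b hb ↦ by rw [(mem_filter.1 hb).2], ← sum_mul,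
    filter_mins_eq_sdiff hc (mem_Icc.1 hm).1,
    sum_sdiff_eq_sub (Fintype.piFinset_subset _ _ fun _ ↦ Icc_subset_Icc_left m.le_succ),
    ← prod_univ_sum, ← prod_univ_sum, prod_const, prod_const, card_univ, Fintype.card_fin]

lemma sum_Icc_mu {p : ℝ} (hp : p ≠ 0) {m r : ℕ} (hm : m ≤ r) :
    ∑ a ∈ Icc m r, mu p r a = p ^ (r - m) := by
  induction h : r - m generalizing m with
  | zero =>
    obtain rfl : m = r := by omega
    simp [mu]
  | succ d ih =>
    rw [← insert_Icc_add_one_left_eq_Icc hm, sum_insert (by simp),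
      ih (by omega) (by omega), mu, if_neg (by omega), h, pow_succ]
    field_simp
    ring

lemma sum_muV_mul_mins {p : ℝ} (hp : p ≠ 0) {c : ℕ} (hc : c ≠ 0) (g : ℕ → ℝ) (k : ℕ) :
    ∑ b ∈ Fintype.piFinset (fun _ : Fin c => Icc 1 (k + 1)),
        muV p (k + 1) b * g (mins (k + 1) b) =
      g (k + 1) + (1 - (p ^ c)⁻¹) * ∑ i ∈ range k, (p ^ c) ^ (k - i) * g (i + 1) := by
  simp only [muV]
  rw [sum_piFinset_prod_mul_mins _ _ hc, sum_Icc_succ_top (by omega), Icc_self, sum_singleton,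
    Icc_eq_empty_of_lt (k + 1).lt_succ_self, sum_empty, add_comm]
  congr 1
  · simp [mu, zero_pow hc]
  · rw [← Ico_add_one_right_eq_Icc, sum_Ico_eq_sum_range, add_tsub_cancel_right, mul_sum]
    refine sum_congr rfl fun i hi ↦ ?_
    obtain ⟨j, rfl⟩ : ∃ j, k = i + j + 1 := ⟨k - i - 1, by grind⟩
    rw [sum_Icc_mu hp (by omega), sum_Icc_mu hp (by omega),
      show i + j + 1 + 1 - (1 + i) = j + 1 by omega, show i + j + 1 + 1 - (1 + i + 1) = j by omega,
      show i + j + 1 - i = j + 1 by omega, add_comm 1 i, ← pow_right_comm, ← pow_right_comm,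
      pow_succ]
    field_simp
    ring

section Geometric

variable {K : Type*} [NormedField K] {x y : K}

lemma hasSum_pow_succ_of_norm_lt_one (hx : ‖x‖ < 1) :
    HasSum (fun n : ℕ ↦ x ^ (n + 1)) (x / (1 - x)) := by
  simpa only [pow_succ', div_eq_mul_inv] using (hasSum_geometric_of_norm_lt_one hx).mul_left x

lemma summable_norm_pow_succ_of_norm_lt_one (hx : ‖x‖ < 1) :
    Summable fun n : ℕ ↦ ‖x ^ (n + 1)‖ := by
  simpa only [norm_pow] using
    (hasSum_pow_succ_of_norm_lt_one (x := ‖x‖) (by rwa [norm_norm])).summable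

lemma hasSum_sum_range_pow_mul_pow (hx : ‖x‖ < 1) (hy : ‖y‖ < 1) :
    HasSum (fun k : ℕ ↦ ∑ i ∈ range k, x ^ (i + 1) * y ^ (k - i))
      (x / (1 - x) * (y / (1 - y))) := by
  have hx' := hasSum_pow_succ_of_norm_lt_one hx
  have hy' := hasSum_pow_succ_of_norm_lt_one hy
  have h := hasSum_sum_range_mul_of_summable_norm' (R := K) (f := fun n ↦ x ^ (n + 1))
    (g := fun n ↦ y ^ (n + 1)) (summable_norm_pow_succ_of_norm_lt_one hx) hx'.summable
    (summable_norm_pow_succ_of_norm_lt_one hy) hy'.summable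
  rw [hx'.tsum_eq, hy'.tsum_eq] at h
  rw [← zero_add (x / (1 - x) * (y / (1 - y)))]
  refine HasSum.zero_add (h.congr_fun fun n ↦ sum_congr rfl fun i hi ↦ ?_)
  rw [Nat.sub_add_comm (mem_range_succ_iff.1 hi)]

end Geometric

lemma summand_eq_pow_add_sum_pow_mul_pow {p T : ℝ} (hp : p ≠ 0) (hT : T ≠ 0) (A B t : ℕ) {c : ℕ}
    (hc : c ≠ 0) (k : ℕ) :
    p ^ (A * (k + 1)) * T ^ (B * (k + 1)) *
        ∑ b ∈ Fintype.piFinset (fun _ : Fin c => Icc 1 (k + 1)),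
          muV p (k + 1) b * T ^ (-(t * mins (k + 1) b : ℤ)) =
      (p ^ A * T ^ ((B : ℤ) - t)) ^ (k + 1) + (1 - (p ^ c)⁻¹) * ∑ i ∈ range k,
        (p ^ A * T ^ ((B : ℤ) - t)) ^ (i + 1) * (p ^ (A + c) * T ^ B) ^ (k - i) := by
  have hg (m : ℕ) : T ^ (-(t * m : ℤ)) = (T ^ (-(t : ℤ))) ^ m := by
    rw [← neg_mul, zpow_mul, zpow_natCast]
  have hx : p ^ A * T ^ ((B : ℤ) - t) = p ^ A * T ^ B * T ^ (-(t : ℤ)) := by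
    rw [sub_eq_add_neg, zpow_add₀ hT, zpow_natCast, mul_assoc]
  have hy : p ^ (A + c) * T ^ B = p ^ c * (p ^ A * T ^ B) := by ring
  rw [sum_muV_mul_mins hp hc (fun m : ℕ ↦ T ^ (-(t * m : ℤ))), hx, hy]
  simp only [hg, pow_mul, ← mul_pow]
  generalize p ^ A * T ^ B = q
  generalize T ^ (-(t : ℤ)) = u
  generalize p ^ c = s
  rw [mul_add, mul_pow, mul_left_comm, Finset.mul_sum]
  congr 2
  refine sum_congr rfl fun i hi ↦ ?_
  rw [show k + 1 = i + 1 + (k - i) by grind, pow_add]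
  ring

theorem crucial_lemma_sum_general (p T : ℝ) (hp : 1 < p) (A B t c : ℕ)
    (hc : 1 ≤ c) (hT : 0 < T)
    (h1 : p ^ A * T ^ ((B : ℤ) - t) < 1) (h2 : p ^ (A + c) * T ^ B < 1) :
    HasSum (fun k : ℕ =>
        p ^ (A * (k + 1)) * T ^ (B * (k + 1)) *
          ∑ b ∈ Fintype.piFinset (fun _ : Fin c => Icc 1 (k + 1)),
            muV p (k + 1) b * T ^ (-(t * mins (k + 1) b : ℤ)))
      (p ^ A * T ^ ((B : ℤ) - t) * (1 - p ^ A * T ^ B) /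
        ((1 - p ^ A * T ^ ((B : ℤ) - t)) * (1 - p ^ (A + c) * T ^ B))) := by
  have hp0 : 0 < p := by linarith
  have hq : p ^ A * T ^ B = (p ^ c)⁻¹ * (p ^ (A + c) * T ^ B) := by
    rw [pow_add]; field_simp
  have hx : ‖p ^ A * T ^ ((B : ℤ) - t)‖ < 1 := by rwa [Real.norm_of_nonneg (by positivity)]
  have hy : ‖p ^ (A + c) * T ^ B‖ < 1 := by rwa [Real.norm_of_nonneg (by positivity)]
  rw [funext (summand_eq_pow_add_sum_pow_mul_pow hp0.ne' hT.ne' A B t (by omega)), hq]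
  generalize p ^ A * T ^ ((B : ℤ) - t) = x at hx ⊢
  generalize p ^ (A + c) * T ^ B = y at hy ⊢
  have hx1 : 1 - x ≠ 0 := by linarith [le_abs_self x, Real.norm_eq_abs x]
  have hy1 : 1 - y ≠ 0 := by linarith [le_abs_self y, Real.norm_eq_abs y]
  have hpc : p ^ c ≠ 0 := by positivity
  rw [show x * (1 - (p ^ c)⁻¹ * y) / ((1 - x) * (1 - y)) =
      x / (1 - x) + (1 - (p ^ c)⁻¹) * (x / (1 - x) * (y / (1 - y))) by field_simp; ring]
  exact (hasSum_pow_succ_of_norm_lt_one hx).add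
    ((hasSum_sum_range_pow_mul_pow hx hy).mul_left _)

/-- The crucial lemma:
`Σ_{r≥1} p^{Ar} T^{Br} Σ_{b∈{1,…,r}^c} μ_p(r;b) T^{−t·min{r,b_1,…,b_c}}
 = p^A T^{B−t} (1 − p^A T^B) / ((1 − p^A T^{B−t})(1 − p^{A+c} T^B))`. -/
theorem crucial_lemma_sum (p T : ℝ) (hp : 1 < p) (A B t c : ℕ)
    (hB : 1 ≤ B) (ht : 1 ≤ t) (hc : 1 ≤ c) (hT : 0 < T)
    (h1 : p ^ A * T ^ ((B : ℤ) - t) < 1) (h2 : p ^ (A + c) * T ^ B < 1) :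
    HasSum (fun k : ℕ =>
        p ^ (A * (k + 1)) * T ^ (B * (k + 1)) *
          ∑ b ∈ Fintype.piFinset (fun _ : Fin c => Icc 1 (k + 1)),
            muV p (k + 1) b * T ^ (-(t * mins (k + 1) b : ℤ)))
      (p ^ A * T ^ ((B : ℤ) - t) * (1 - p ^ A * T ^ B) /
        ((1 - p ^ A * T ^ ((B : ℤ) - t)) * (1 - p ^ (A + c) * T ^ B))) :=
  crucial_lemma_sum_general p T hp A B t c hc hT h1 h2
end
end

section
/- For every real p ≥ 2 and every real T with 0 < T ≤ p^{−9}: S_2(p,T) + (p+1) · S_{12}(p,T) = ( (1 + p^{7} T^{3}) / (1 − p^{8} T^{3}) ) · S_2(p,T). (This is the identity ∑_{J_1 ⊆ {1*}} b_{J_1}(p)(A_{J_1∪2*} − A_{J_1∪2}) = I_1(Y_1)·(A_{2*} − A_2) with Y_1 = p^8 T^3 and I_1(Y_1) = 1 + (1+p^{−1})·Y_1/(1−Y_1).) -/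
open Finset

noncomputable section

/-- The `(r₁,r₂)`-term of the series `S₁₂(p,T) = A_{1*,2*} − A_{1*,2}`. -/
def S12term (p T : ℝ) (r1 r2 : ℕ) : ℝ :=
  p ^ (8 * r2 + 4 * r1) * T ^ (6 * r2 + 5 * r1) *
    ∑ a15 ∈ Icc 1 (r1 + r2), ∑ a14 ∈ Icc 1 (r1 + r2), ∑ a13 ∈ Icc 1 (r1 + r2),
      ∑ a12 ∈ Icc 1 (r1 + r2), ∑ a11 ∈ Icc 1 r1, ∑ a25 ∈ Icc 1 r2, ∑ a24 ∈ Icc 1 r2,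
        ∑ a23 ∈ Icc 1 r2, ∑ a22 ∈ Icc 1 r2,
          mu p (r1 + r2) a15 * mu p (r1 + r2) a14 * mu p (r1 + r2) a13 * mu p (r1 + r2) a12 *
            mu p r1 a11 * mu p r2 a25 * mu p r2 a24 * mu p r2 a23 * mu p r2 a22 *
            (T ^ (-(min r1 a15 +
                min (r1 + r2) (min a15 (min (a25 + r1) (a24 + r1))) : ℤ)) -
              T ^ (-(2 * min r1 a15 : ℤ)))

/-- The `r`-term of the series `S₂(p,T) = A_{2*} − A_2`. -/
def S2term (p T : ℝ) (r : ℕ) : ℝ :=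
  p ^ (8 * r) * T ^ (6 * r) *
    ∑ b ∈ Fintype.piFinset (fun _ : Fin 8 => Icc 1 r),
      muV p r b *
        (T ^ (-(min r (min (b 0) (min (b 1) (b 2))) : ℤ)) - 1)

/-!
Only the terms of `S₁₂` with `a₁₅ > r₁` survive, since for `a₁₅ ≤ r₁` both exponents equal
`2 a₁₅`. Writing `a₁₅ = r₁ + s`, one has `μ(r₁ + r₂, r₁ + s) = μ(r₂, s)` and the bracket becomes
`T^{-2r₁} (T^{-min(r₂, s, a₂₅, a₂₄)} - 1)`. Summing out the free variables with
`∑_b μ(a, b) = p^{a-1}`, the `(r₁, r₂)`-term of `S₁₂` is `p⁻¹ Y^{r₁}` times the `r₂`-term of `S₂`,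
where `Y = p⁸T³ < 1`. So the double series factors as `S₁₂ = p⁻¹ Y / (1 - Y) · S₂`, and
`1 + (p + 1) p⁻¹ Y / (1 - Y) = (1 + p⁷T³) / (1 - Y)`.
-/

lemma sum_mu {p : ℝ} (hp : p ≠ 0) {a : ℕ} (ha : 1 ≤ a) :
    ∑ b ∈ Icc 1 a, mu p a b = p ^ a / p := by
  induction a, ha using Nat.le_induction with
  | base => simp [mu, hp]
  | succ n hn ih =>
    have hstep : ∀ b ∈ Icc 1 n, mu p (n + 1) b = p * mu p n b - if b = n then 1 else 0 := by
      intro b hb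
      rcases Nat.lt_or_eq_of_le (mem_Icc.1 hb).2 with hlt | rfl
      · rw [mu, mu, if_neg (by omega), if_neg hlt.ne, if_neg hlt.ne, Nat.succ_sub hlt.le,
          pow_succ]
        ring
      · rw [mu, mu, if_neg (by omega), if_pos rfl, if_pos rfl, Nat.add_sub_cancel_left, pow_one]
        field_simp
    rw [sum_Icc_succ_top (by omega), sum_congr rfl hstep, sum_sub_distrib, ← mul_sum, ih,
      sum_ite_eq', if_pos (right_mem_Icc.2 hn), mu, if_pos rfl]
    field_simp
    ring

lemma mu_add_add (p : ℝ) (r₁ r₂ s : ℕ) : mu p (r₁ + r₂) (r₁ + s) = mu p r₂ s := by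
  simp only [mu, Nat.add_left_cancel_iff, Nat.add_sub_add_left]

lemma sum_piFinset_const_succ {α M : Type*} [AddCommMonoid M] {n : ℕ} (s : Finset α)
    (F : (Fin (n + 1) → α) → M) :
    ∑ b ∈ Fintype.piFinset (fun _ ↦ s), F b =
      ∑ x ∈ s, ∑ b ∈ Fintype.piFinset (fun _ ↦ s), F (Fin.cons x b) := by
  rw [← sum_product']
  refine sum_nbij' (fun b ↦ (b 0, Fin.tail b)) (fun q ↦ Fin.cons q.1 q.2) ?_ ?_ ?_ ?_ ?_
  · intro b hb
    simp only [mem_product, Fintype.mem_piFinset] at hb ⊢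
    exact ⟨hb 0, fun i ↦ hb i.succ⟩
  · intro q hq
    simpa [Fin.forall_fin_succ] using hq
  · intro b _; exact Fin.cons_self_tail b
  · intro q _; simp
  · intro b _; simp

lemma muV_cons (p : ℝ) (a x : ℕ) {k : ℕ} (b : Fin k → ℕ) :
    muV p a (Fin.cons x b : Fin (k + 1) → ℕ) = mu p a x * muV p a b :=
  Fin.prod_univ_succ _

lemma sum_muV {p : ℝ} (hp : p ≠ 0) {a : ℕ} (ha : 1 ≤ a) (k : ℕ) :
    ∑ b ∈ Fintype.piFinset (fun _ : Fin k ↦ Icc 1 a), muV p a b = (p ^ a / p) ^ k := by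
  simp only [muV, ← prod_univ_sum, sum_mu hp ha, prod_const, card_univ, Fintype.card_fin]

def S2core (p T : ℝ) (r : ℕ) : ℝ :=
  ∑ x ∈ Icc 1 r, ∑ y ∈ Icc 1 r, ∑ z ∈ Icc 1 r,
    mu p r x * mu p r y * mu p r z * (T ^ (-(min r (min x (min y z)) : ℤ)) - 1)

lemma S2term_eq {p : ℝ} (T : ℝ) (hp : p ≠ 0) {r : ℕ} (hr : 1 ≤ r) :
    S2term p T r = p ^ (8 * r) * T ^ (6 * r) * ((p ^ r / p) ^ 5 * S2core p T r) := by
  rw [S2term, S2core, ← sum_muV hp hr 5]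
  simp only [sum_piFinset_const_succ (n := 7), sum_piFinset_const_succ (n := 6),
    sum_piFinset_const_succ (n := 5), muV_cons, Fin.cons_zero, Fin.cons_one,
    show (2 : Fin 8) = Fin.succ 1 from rfl, Fin.cons_succ, sum_mul, mul_sum]
  refine sum_congr rfl fun x _ ↦ sum_congr rfl fun y _ ↦ sum_congr rfl fun z _ ↦
    sum_congr rfl fun c _ ↦ by ring

lemma sum_Icc_one_add {M : Type*} [AddCommMonoid M] (f : ℕ → M) (m n : ℕ) :
    ∑ a ∈ Icc 1 (m + n), f a = ∑ a ∈ Icc 1 m, f a + ∑ s ∈ Icc 1 n, f (m + s) := by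
  induction n with
  | zero => simp
  | succ n ih => rw [← add_assoc, sum_Icc_succ_top (by omega), ih, sum_Icc_succ_top (by omega),
      add_assoc, add_assoc]

lemma S12_bracket_add {T : ℝ} (hT : T ≠ 0) (r₁ r₂ s c d : ℕ) :
    T ^ (-(min r₁ (r₁ + s) + min (r₁ + r₂) (min (r₁ + s) (min (c + r₁) (d + r₁))) : ℤ)) -
        T ^ (-(2 * min r₁ (r₁ + s) : ℤ)) =
      (T ^ (2 * r₁))⁻¹ * (T ^ (-(min r₂ (min s (min c d)) : ℤ)) - 1) := by
  rw [show (-(min r₁ (r₁ + s) + min (r₁ + r₂) (min (r₁ + s) (min (c + r₁) (d + r₁))) : ℤ)) =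
      -((2 * r₁ : ℕ) : ℤ) + -(min r₂ (min s (min c d)) : ℤ) by omega,
    show (-(2 * min r₁ (r₁ + s) : ℤ)) = -((2 * r₁ : ℕ) : ℤ) by omega, zpow_add₀ hT, zpow_neg,
    zpow_natCast]
  ring

lemma S12term_eq {p T : ℝ} (hp : p ≠ 0) (hT : T ≠ 0) {r₁ r₂ : ℕ} (hr₁ : 1 ≤ r₁) (hr₂ : 1 ≤ r₂) :
    S12term p T r₁ r₂ = p ^ (8 * r₂ + 4 * r₁) * T ^ (6 * r₂ + 5 * r₁) *
      ((p ^ (r₁ + r₂) / p) ^ 3 * (p ^ r₁ / p) * (p ^ r₂ / p) ^ 2 * (T ^ (2 * r₁))⁻¹ *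
        S2core p T r₂) := by
  rw [S12term, sum_Icc_one_add]
  have hvanish : ∀ a ∈ Icc 1 r₁, ∀ c d : ℕ,
      (-(min r₁ a + min (r₁ + r₂) (min a (min (c + r₁) (d + r₁))) : ℤ)) = -(2 * min r₁ a : ℤ) := by
    intro a ha c d
    have := (mem_Icc.1 ha).2
    omega
  rw [sum_eq_zero fun a ha ↦ by simp only [hvanish a ha, sub_self, mul_zero, sum_const_zero]]
  simp only [mu_add_add, S12_bracket_add hT]
  rw [zero_add, S2core]
  congr 1
  rw [mul_sum]
  refine sum_congr rfl fun s _ ↦ ?_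
  -- Each free weight is moved in front of everything that does not depend on it, so that
  -- `← mul_sum` and `← sum_mul` can pull its sum out.
  calc _ = ∑ a₄ ∈ Icc 1 (r₁ + r₂), ∑ a₃ ∈ Icc 1 (r₁ + r₂), ∑ a₂ ∈ Icc 1 (r₁ + r₂),
        ∑ a₁ ∈ Icc 1 r₁, ∑ b₅ ∈ Icc 1 r₂, ∑ b₄ ∈ Icc 1 r₂, ∑ b₃ ∈ Icc 1 r₂, ∑ b₂ ∈ Icc 1 r₂,
          mu p (r₁ + r₂) a₄ * (mu p (r₁ + r₂) a₃ * (mu p (r₁ + r₂) a₂ * (mu p r₁ a₁ *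
            (mu p r₂ b₃ * (mu p r₂ b₂ * ((T ^ (2 * r₁))⁻¹ * (mu p r₂ s * mu p r₂ b₅ *
              mu p r₂ b₄ * (T ^ (-(min r₂ (min s (min b₅ b₄)) : ℤ)) - 1)))))))) := by
        refine sum_congr rfl fun _ _ ↦ sum_congr rfl fun _ _ ↦ sum_congr rfl fun _ _ ↦
          sum_congr rfl fun _ _ ↦ sum_congr rfl fun _ _ ↦ sum_congr rfl fun _ _ ↦
            sum_congr rfl fun _ _ ↦ sum_congr rfl fun _ _ ↦ by ring
    _ = _ := by
        simp only [← mul_sum, ← sum_mul, sum_mu hp hr₁, sum_mu hp hr₂,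
          sum_mu hp (le_add_right hr₁)]
        ring

lemma S12term_eq_mul_S2term {p T : ℝ} (hp : p ≠ 0) (hT : T ≠ 0) {r₁ r₂ : ℕ} (hr₁ : 1 ≤ r₁)
    (hr₂ : 1 ≤ r₂) : S12term p T r₁ r₂ = p⁻¹ * (p ^ 8 * T ^ 3) ^ r₁ * S2term p T r₂ := by
  rw [S12term_eq hp hT hr₁ hr₂, S2term_eq T hp hr₂]
  field_simp
  ring

/-- No summability of `f` is needed: otherwise the product family is not summable either (unless
`g = 0`), and both sides are `0` by the `tsum` convention. -/
theorem tsum_prod_mul_of_summable_right {𝕜 β γ : Type*} [RCLike 𝕜] (f : β → 𝕜) {g : γ → 𝕜}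
    (hg : Summable g) :
    ∑' x : β × γ, f x.1 * g x.2 = (∑' b, f b) * ∑' c, g c := by
  by_cases hf : Summable f
  · have hf' : Summable fun b ↦ ‖f b‖ := summable_norm_iff.2 hf
    have hg' : Summable fun c ↦ ‖g c‖ := summable_norm_iff.2 hg
    exact (tsum_mul_tsum_of_summable_norm hf' hg').symm
  by_cases hg0 : ∀ c, g c = 0
  · simp [hg0]
  obtain ⟨c, hc⟩ := not_forall.1 hg0
  have hfg : ¬ Summable fun x : β × γ ↦ f x.1 * g x.2 := fun h ↦
    hf ((summable_mul_right_iff hc).1 (h.prod_symm.prod_factor c))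
  rw [tsum_eq_zero_of_not_summable hf, tsum_eq_zero_of_not_summable hfg, zero_mul]

/-- The identity `Σ_{J₁⊆{1*}} b_{J₁}(p)(A_{J₁∪2*} − A_{J₁∪2}) = I₁(Y₁)·(A_{2*} − A_2)`:
for `p ≥ 2` and `0 < T ≤ p^{-9}`,
`S₂ + (p+1)·S₁₂ = ((1 + p^7 T^3)/(1 − p^8 T^3)) · S₂`. -/
theorem lower_igusa_identity (p T : ℝ) (hp : 2 ≤ p) (hT0 : 0 < T)
    (hT : T ≤ ((p : ℝ) ^ (9 : ℕ))⁻¹) :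
    (∑' r : ℕ, S2term p T (r + 1)) +
        (p + 1) * ∑' rr : ℕ × ℕ, S12term p T (rr.2 + 1) (rr.1 + 1) =
      (1 + p ^ 7 * T ^ 3) / (1 - p ^ 8 * T ^ 3) * ∑' r : ℕ, S2term p T (r + 1) := by
  have hp1 : 1 < p := by linarith
  have hp0 : p ≠ 0 := by positivity
  have hY0 : 0 ≤ p ^ 8 * T ^ 3 := by positivity
  have hY1 : p ^ 8 * T ^ 3 < 1 :=
    calc p ^ 8 * T ^ 3 < p ^ 27 * T ^ 3 := by gcongr; norm_num
      _ = (p ^ 9 * T) ^ 3 := by ring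
      _ ≤ 1 := pow_le_one₀ (by positivity) ((le_inv_mul_iff₀ (by positivity)).1 (by rwa [mul_one]))
  have hgeom : HasSum (fun k : ℕ ↦ p⁻¹ * (p ^ 8 * T ^ 3) ^ (k + 1))
      (p⁻¹ * (p ^ 8 * T ^ 3 * (1 - p ^ 8 * T ^ 3)⁻¹)) := by
    have h := (hasSum_geometric_of_lt_one hY0 hY1).mul_left (p⁻¹ * (p ^ 8 * T ^ 3))
    simpa only [mul_assoc p⁻¹, ← pow_succ'] using h
  have hS12 : ∑' rr : ℕ × ℕ, S12term p T (rr.2 + 1) (rr.1 + 1) =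
      (∑' r : ℕ, S2term p T (r + 1)) * (p⁻¹ * (p ^ 8 * T ^ 3 * (1 - p ^ 8 * T ^ 3)⁻¹)) := by
    rw [← hgeom.tsum_eq, ← tsum_prod_mul_of_summable_right _ hgeom.summable]
    exact tsum_congr fun rr ↦ by
      rw [S12term_eq_mul_S2term hp0 hT0.ne' (by omega) (by omega), mul_comm]
  rw [hS12]
  field_simp [(sub_pos.2 hY1).ne']
  ring
end
end
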